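/- Let T_0 be an interior triangle with neighboring triangles T_1, T_2, T_3 sharing edges e_1, e_2, e_3 of T_0 respectively, with areas S_0, S_1, S_2, S_3. The field ψ_{T_0} equal to (S_j/(S_j+S_0)) w_{T_j,e_j} on T_j (j=1,2,3), to (1/3)[∑_{j=1}^3 ((S_j−2S_0)/(S_j+S_0)) w_{T_0,e_j} + w_{T_0,e_2,e_3} + w_{T_0,e_3,e_1} + w_{T_0,e_1,e_2}] on T_0, and zero elsewhere, is divergence free on each cell and has continuous normal components and continuous edge-integral tangential components across the edges e_1, e_2, e_3, with vanishing normal components and vanishing edge-integral tangential components on the outer boundary of the four-cell patch. -/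

import Mathlib

/-!
Each piece of `ψ_{T_0}` is the curl of a polynomial stream function in the barycentric
coordinates, hence divergence free. Along a segment `[a, b]` the normal component of `curl φ` is
minus the derivative of `φ` along the segment, and its tangential component is the derivative of
`φ` in the direction `rot90 (b - a)`. On `e_j` the central stream function exceeds the
neighbouring one by the constant `1/3`, and the neighbouring one vanishes on the outer edges of
`T_j`; this gives the normal conditions. For the tangential edge means, `w_{T,e}` has mean
`∇λ · rot90 e` on `e` and `0` on the two other edges, while `curl λ²` has mean
`(λ a + λ b) ∇λ · rot90 (b - a)` on `[a, b]`; the weights `S_j/(S_j+S_0)` and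
`(S_j-2S_0)/(S_j+S_0)` are exactly those that balance these means across `e_j`.
-/

open MeasureTheory
open scoped Classical

noncomputable section

/-- The plane. -/
abbrev V2 : Type := ℝ × ℝ

/-- Euclidean dot product on the plane. -/
def dot2 (u v : V2) : ℝ := u.1 * v.1 + u.2 * v.2

/-- 2D cross product. -/
def cross2 (u v : V2) : ℝ := u.1 * v.2 - u.2 * v.1

/-- Euclidean norm on the plane. -/
def enorm2 (u : V2) : ℝ := Real.sqrt (u.1 ^ 2 + u.2 ^ 2)

/-- rotation by 90 degrees (a normal vector of the direction `u`). -/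
def rot90 (u : V2) : V2 := (-u.2, u.1)

/-- `f` is (the restriction of) a polynomial of total degree at most `k`. -/
def IsPolyDeg (k : ℕ) (f : V2 → ℝ) : Prop :=
  ∃ p : MvPolynomial (Fin 2) ℝ, p.totalDegree ≤ k ∧
    ∀ x : V2, f x = MvPolynomial.eval (fun i : Fin 2 => if i = 0 then x.1 else x.2) p

/-- A vector field whose two components are polynomials of degree at most `k`. -/
def IsVPolyDeg (k : ℕ) (v : V2 → V2) : Prop :=
  IsPolyDeg k (fun x => (v x).1) ∧ IsPolyDeg k (fun x => (v x).2)

/-- partial derivative in the `x` direction -/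
def pd1 (f : V2 → ℝ) (x : V2) : ℝ := fderiv ℝ f x (1, 0)

/-- partial derivative in the `y` direction -/
def pd2 (f : V2 → ℝ) (x : V2) : ℝ := fderiv ℝ f x (0, 1)

/-- `curl` of a scalar function: `(∂w/∂y, -∂w/∂x)`. -/
def curl2 (w : V2 → ℝ) : V2 → V2 := fun x => (pd2 w x, - pd1 w x)

/-- divergence of a planar vector field -/
def div2 (v : V2 → V2) (x : V2) : ℝ :=
  pd1 (fun y => (v y).1) x + pd2 (fun y => (v y).2) x

/-- Parametrization of the segment from `p` to `q`. -/
def seg (p q : V2) (s : ℝ) : V2 := p + s • (q - p)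

/-- The barycentric coordinate, on the triangle with vertices `p, q, r`,
associated with the vertex `p`. -/
def bary (p q r : V2) (x : V2) : ℝ :=
  cross2 (q - x) (r - x) / cross2 (q - p) (r - p)

/-- The closed triangle with vertices `p, q, r`. -/
def hull3 (p q r : V2) : Set V2 := convexHull ℝ {p, q, r}

/-- On the triangle `(p,q,r)`, the divergence-free function
`w_{T,e} := curl(λ' λ'' (3λ − 1))` associated with the edge `e` opposite `p`
(`λ` is the barycentric coordinate of `p`). -/
def wT (p q r : V2) : V2 → V2 :=
  curl2 (fun x => bary q r p x * bary r p q x * (3 * bary p q r x - 1))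

/-- On the triangle `(p,q,r)`, the divergence-free function
`w_{T,e',e''} := curl(λ²)` associated with the two edges `e', e''` meeting at `p`
(`λ` is the barycentric coordinate of `p`, opposite the remaining edge). -/
def wP (p q r : V2) : V2 → V2 :=
  curl2 (fun x => (bary p q r x) ^ 2)

/-- The normal component of `v` along the segment `[p,q]` is affine (degree ≤ 1)
in the arclength parameter. -/
def NormalP1On (p q : V2) (v : V2 → V2) : Prop :=
  ∃ α β : ℝ, ∀ s ∈ Set.Icc (0 : ℝ) 1,
    dot2 (v (seg p q s)) (rot90 (q - p)) = α + β * s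

/-- Membership in `P^{2-}` of the triangle with vertices `p, q, r`. -/
def memP2mTri (p q r : V2) (v : V2 → V2) : Prop :=
  IsVPolyDeg 2 v ∧ NormalP1On p q v ∧ NormalP1On q r v ∧ NormalP1On r p v

/-- The normal components of `u` and `w` agree on the segment `[p,q]`. -/
def NormalCont (p q : V2) (u w : V2 → V2) : Prop :=
  ∀ s ∈ Set.Icc (0 : ℝ) 1,
    dot2 (u (seg p q s)) (rot90 (q - p)) = dot2 (w (seg p q s)) (rot90 (q - p))

/-- The edge integrals of the tangential components of `u` and `w` on `[p,q]` agree. -/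
def TangMeanCont (p q : V2) (u w : V2 → V2) : Prop :=
  (∫ s in (0:ℝ)..1, dot2 (u (seg p q s)) (q - p)) =
    ∫ s in (0:ℝ)..1, dot2 (w (seg p q s)) (q - p)

/-- The normal component of `u` vanishes on the segment `[p,q]`. -/
def NormalZero (p q : V2) (u : V2 → V2) : Prop :=
  ∀ s ∈ Set.Icc (0 : ℝ) 1, dot2 (u (seg p q s)) (rot90 (q - p)) = 0

/-- The edge integral of the tangential component of `u` on `[p,q]` vanishes. -/
def TangMeanZero (p q : V2) (u : V2 → V2) : Prop :=
  (∫ s in (0:ℝ)..1, dot2 (u (seg p q s)) (q - p)) = 0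

/-- An interior vertex patch: `m ≥ 3` triangles `T i = conv{O, A (i−1), A i}`
around the interior vertex `O`, cyclically ordered (each cell positively
oriented and nondegenerate) with pairwise disjoint interiors. -/
structure VertexPatch (m : ℕ) where
  O : V2
  A : ZMod m → V2
  hm : 3 ≤ m
  nondeg : ∀ i : ZMod m, 0 < cross2 (A (i - 1) - O) (A i - O)
  disj : ∀ i j : ZMod m, i ≠ j →
    interior (hull3 O (A (i - 1)) (A i)) ∩ interior (hull3 O (A (j - 1)) (A j)) = ∅

namespace VertexPatch

variable {m : ℕ} (P : VertexPatch m)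

/-- Area `S_i` of the cell `T_i`. -/
def S (i : ZMod m) : ℝ := cross2 (P.A (i - 1) - P.O) (P.A i - P.O) / 2

/-- Length `d_{m+i}` of the outer (boundary) edge `A_{i-1} A_i`. -/
def dOut (i : ZMod m) : ℝ := enorm2 (P.A i - P.A (i - 1))

/-- `Z_O`: piecewise-`P^{2-}` fields on the patch, divergence free on each cell,
with continuous normal components and continuous edge-integral tangential
components across the interior edges `O A_i`, and vanishing normal components and
edge-integral tangential components on the boundary edges `A_{i-1} A_i`. -/
def memZO (v : ZMod m → V2 → V2) : Prop :=
  (∀ i, memP2mTri P.O (P.A (i - 1)) (P.A i) (v i)) ∧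
  (∀ i, ∀ x ∈ hull3 P.O (P.A (i - 1)) (P.A i), div2 (v i) x = 0) ∧
  (∀ i, NormalCont P.O (P.A i) (v i) (v (i + 1)) ∧
        TangMeanCont P.O (P.A i) (v i) (v (i + 1))) ∧
  (∀ i, NormalZero (P.A (i - 1)) (P.A i) (v i) ∧
        TangMeanZero (P.A (i - 1)) (P.A i) (v i))

end VertexPatch

/-- Area `S_0` of the central cell `T_0` with vertices `B 0, B 1, B 2`. -/
def S0area (B : Fin 3 → V2) : ℝ := |cross2 (B 1 - B 0) (B 2 - B 0)| / 2

/-- Area `S_j` of the neighbor `T_j` with vertices `C j, B (j+1), B (j+2)`. -/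
def Sjarea (B C : Fin 3 → V2) (j : Fin 3) : ℝ :=
  |cross2 (B (j + 1) - C j) (B (j + 2) - C j)| / 2

/-- The piece of `ψ_{T_0}` on the neighbor `T_j`: `(S_j/(S_j+S_0)) w_{T_j,e_j}`. -/
def psiT0nb (B C : Fin 3 → V2) (j : Fin 3) : V2 → V2 := fun x =>
  (Sjarea B C j / (Sjarea B C j + S0area B)) • wT (C j) (B (j + 1)) (B (j + 2)) x

/-- The piece of `ψ_{T_0}` on the central cell `T_0`:
`(1/3)[∑_j ((S_j−2S_0)/(S_j+S_0)) w_{T_0,e_j} + w_{T_0,e_2,e_3}+w_{T_0,e_3,e_1}+w_{T_0,e_1,e_2}]`. -/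
def psiT0c (B C : Fin 3 → V2) : V2 → V2 := fun x =>
  (1/3 : ℝ) •
    (∑ j : Fin 3, ((Sjarea B C j - 2 * S0area B) / (Sjarea B C j + S0area B))
        • wT (B j) (B (j + 1)) (B (j + 2)) x
     + ∑ j : Fin 3, wP (B j) (B (j + 1)) (B (j + 2)) x)


lemma dot2_add (u v d : V2) : dot2 (u + v) d = dot2 u d + dot2 v d := by
  simp only [dot2, Prod.fst_add, Prod.snd_add]; ring

lemma dot2_smul (c : ℝ) (u d : V2) : dot2 (c • u) d = c * dot2 u d := by
  simp only [dot2, Prod.smul_fst, Prod.smul_snd, smul_eq_mul]; ring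

lemma cross2_rotate (p q r : V2) : cross2 (r - q) (p - q) = cross2 (q - p) (r - p) := by
  simp only [cross2, Prod.fst_sub, Prod.snd_sub]; ring

lemma clm_apply_eq_coord (f : V2 →L[ℝ] ℝ) (d : V2) : f d = d.1 * f (1, 0) + d.2 * f (0, 1) := by
  have hd : d = d.1 • ((1 : ℝ), (0 : ℝ)) + d.2 • ((0 : ℝ), (1 : ℝ)) := by ext <;> simp
  nth_rewrite 1 [hd]
  rw [map_add, map_smul, map_smul, smul_eq_mul, smul_eq_mul]

lemma hasDerivAt_comp_seg {φ : V2 → ℝ} {a b : V2} {s : ℝ}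
    (hφ : DifferentiableAt ℝ φ (seg a b s)) :
    HasDerivAt (fun t => φ (seg a b t)) (fderiv ℝ φ (seg a b s) (b - a)) s := by
  have hseg : HasDerivAt (fun t => a + t • (b - a)) (b - a) s := by
    simpa using ((hasDerivAt_id s).smul_const (b - a)).const_add a
  exact hφ.hasFDerivAt.comp_hasDerivAt s hseg

section Barycentric

variable (p q r : V2)

lemma bary_seg (a b : V2) (s : ℝ) :
    bary p q r (seg a b s) = (1 - s) * bary p q r a + s * bary p q r b := by
  simp only [bary, seg, cross2, Prod.fst_add, Prod.snd_add, Prod.fst_sub, Prod.snd_sub,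
    Prod.smul_fst, Prod.smul_snd, smul_eq_mul]
  ring

lemma bary_left : bary p q r q = 0 := by
  simp [bary, cross2]

lemma bary_right : bary p q r r = 0 := by
  simp [bary, cross2]

variable {p q r} in
lemma bary_self_rotate (h : cross2 (q - p) (r - p) ≠ 0) :
    bary p q r p = 1 ∧ bary q r p q = 1 ∧ bary r p q r = 1 := by
  refine ⟨div_self h, div_self ?_, div_self ?_⟩
  · rwa [cross2_rotate]
  · rwa [cross2_rotate q r p, cross2_rotate p q r]

@[fun_prop]
lemma contDiff_bary {n : WithTop ℕ∞} : ContDiff ℝ n (bary p q r) := by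
  unfold bary cross2
  fun_prop

lemma fderiv_bary_rot90 (x d : V2) :
    fderiv ℝ (bary p q r) x (rot90 d) = dot2 (r - q) d / cross2 (q - p) (r - p) := by
  set L : V2 →L[ℝ] ℝ := (q - r).2 • ContinuousLinearMap.fst ℝ ℝ ℝ
    - (q - r).1 • ContinuousLinearMap.snd ℝ ℝ ℝ
  have hbary : bary p q r = fun y => (cross2 q r + L y) * (cross2 (q - p) (r - p))⁻¹ := by
    funext y
    simp [bary, L, cross2]
    ring
  rw [hbary, ((L.hasFDerivAt.const_add (cross2 q r)).mul_const _).fderiv]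
  simp [L, rot90, dot2]
  ring

end Barycentric

lemma dot2_curl2 (φ : V2 → ℝ) (y d : V2) : dot2 (curl2 φ y) d = fderiv ℝ φ y (rot90 d) := by
  rw [clm_apply_eq_coord (fderiv ℝ φ y)]
  simp only [curl2, pd1, pd2, dot2, rot90]
  ring

lemma dot2_curl2_rot90 (φ : V2 → ℝ) (y d : V2) :
    dot2 (curl2 φ y) (rot90 d) = -fderiv ℝ φ y d := by
  rw [clm_apply_eq_coord (fderiv ℝ φ y) d]
  simp only [curl2, pd1, pd2, dot2, rot90]
  ring

lemma div2_curl2 {φ : V2 → ℝ} {x : V2} (hφ : ContDiffAt ℝ 2 φ x) : div2 (curl2 φ) x = 0 := by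
  have hsymm := hφ.isSymmSndFDerivAt (by simp)
  have hdiff : DifferentiableAt ℝ (fderiv ℝ φ) x :=
    (hφ.fderiv_right (m := 1) (by norm_num)).differentiableAt one_ne_zero
  simp only [div2, curl2, pd1, pd2]
  rw [fderiv_fun_neg, fderiv_clm_apply hdiff (differentiableAt_const _),
    fderiv_clm_apply hdiff (differentiableAt_const _)]
  simp [hsymm (1, 0) (0, 1)]

lemma continuous_curl2 {φ : V2 → ℝ} (hφ : ContDiff ℝ 1 φ) : Continuous (curl2 φ) := by
  have h := hφ.continuous_fderiv one_ne_zero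
  exact (h.clm_apply continuous_const).prodMk (h.clm_apply continuous_const).neg

lemma curl2_add {f g : V2 → ℝ} (hf : Differentiable ℝ f) (hg : Differentiable ℝ g) :
    curl2 (fun x => f x + g x) = fun x => curl2 f x + curl2 g x := by
  funext x
  simp [curl2, pd1, pd2, fderiv_fun_add (hf x) (hg x)]
  ring

lemma curl2_const_mul (c : ℝ) (f : V2 → ℝ) :
    curl2 (fun x => c * f x) = fun x => c • curl2 f x := by
  funext x
  simp [curl2, pd1, pd2, show (fun x => c * f x) = c • f from rfl, fderiv_const_smul_field]

lemma normalCont_curl2_of_eq_add_const {φ ψ : V2 → ℝ} {a b : V2} {c : ℝ}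
    (hφ : Differentiable ℝ φ) (hψ : Differentiable ℝ ψ)
    (h : ∀ s, φ (seg a b s) = ψ (seg a b s) + c) :
    NormalCont a b (curl2 φ) (curl2 ψ) := by
  intro s _
  have hφ' := hasDerivAt_comp_seg (hφ (seg a b s))
  simp only [h] at hφ'
  rw [dot2_curl2_rot90, dot2_curl2_rot90,
    hφ'.unique ((hasDerivAt_comp_seg (hψ (seg a b s))).add_const c)]

lemma normalZero_curl2_of_eq_const {φ : V2 → ℝ} {a b : V2} {c : ℝ}
    (hφ : Differentiable ℝ φ) (h : ∀ s, φ (seg a b s) = c) :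
    NormalZero a b (curl2 φ) := by
  intro s _
  have hφ' := hasDerivAt_comp_seg (hφ (seg a b s))
  simp only [h] at hφ'
  rw [dot2_curl2_rot90, hφ'.unique (hasDerivAt_const s c), neg_zero]

section Stream

variable (p q r : V2)

def streamT : V2 → ℝ := fun x => bary q r p x * bary r p q x * (3 * bary p q r x - 1)

def streamP : V2 → ℝ := fun x => bary p q r x ^ 2

@[fun_prop]
lemma contDiff_streamT {n : WithTop ℕ∞} : ContDiff ℝ n (streamT p q r) := by
  unfold streamT; fun_prop

@[fun_prop]
lemma contDiff_streamP {n : WithTop ℕ∞} : ContDiff ℝ n (streamP p q r) := by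
  unfold streamP; fun_prop

lemma curl2_streamT : curl2 (streamT p q r) = wT p q r := rfl

lemma curl2_streamP : curl2 (streamP p q r) = wP p q r := rfl

@[fun_prop]
lemma continuous_wT : Continuous (wT p q r) := continuous_curl2 (contDiff_streamT p q r)

@[fun_prop]
lemma continuous_wP : Continuous (wP p q r) := continuous_curl2 (contDiff_streamP p q r)

lemma dot2_wT (y d : V2) :
    dot2 (wT p q r y) d = (dot2 (p - r) d * bary r p q y * (3 * bary p q r y - 1)
      + dot2 (q - p) d * bary q r p y * (3 * bary p q r y - 1)
      + 3 * dot2 (r - q) d * bary q r p y * bary r p q y) / cross2 (q - p) (r - p) := by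
  have hb : ∀ p q r : V2, HasFDerivAt (bary p q r) (fderiv ℝ (bary p q r) y) y := fun p q r =>
    ((contDiff_bary p q r (n := 1)).differentiable one_ne_zero y).hasFDerivAt
  have h := ((hb q r p).fun_mul (hb r p q)).fun_mul (((hb p q r).const_mul 3).sub_const 1)
  rw [wT, dot2_curl2, h.fderiv]
  simp only [add_apply, smul_apply, smul_eq_mul, fderiv_bary_rot90]
  rw [cross2_rotate q r p, cross2_rotate p q r]
  ring

lemma dot2_wP (y d : V2) :
    dot2 (wP p q r y) d = 2 * bary p q r y * dot2 (r - q) d / cross2 (q - p) (r - p) := by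
  have hb := ((contDiff_bary p q r (n := 1)).differentiable one_ne_zero y).hasFDerivAt
  rw [wP, dot2_curl2, (hb.pow 2).fderiv]
  simp only [smul_apply, smul_eq_mul, fderiv_bary_rot90]
  ring

end Stream

lemma integral_quadratic (c₀ c₁ c₂ : ℝ) :
    ∫ s in (0 : ℝ)..1, (c₀ + c₁ * s + c₂ * s ^ 2) = c₀ + c₁ / 2 + c₂ / 3 := by
  rw [intervalIntegral.integral_add (by apply Continuous.intervalIntegrable; fun_prop)
      (by apply Continuous.intervalIntegrable; fun_prop),
    intervalIntegral.integral_add (by apply Continuous.intervalIntegrable; fun_prop)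
      (by apply Continuous.intervalIntegrable; fun_prop),
    intervalIntegral.integral_const, intervalIntegral.integral_const_mul,
    intervalIntegral.integral_const_mul, integral_id, integral_pow]
  norm_num
  ring

def tangMean (a b : V2) (v : V2 → V2) : ℝ := ∫ s in (0 : ℝ)..1, dot2 (v (seg a b s)) (b - a)

section TangMean

variable (a b : V2)

lemma tangMean_add {u v : V2 → V2} (hu : Continuous u) (hv : Continuous v) :
    tangMean a b (fun x => u x + v x) = tangMean a b u + tangMean a b v := by
  have hint : ∀ {w : V2 → V2}, Continuous w →
      IntervalIntegrable (fun s => dot2 (w (seg a b s)) (b - a)) volume 0 1 :=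
    fun hw => by apply Continuous.intervalIntegrable; unfold dot2 seg; fun_prop
  simp only [tangMean, dot2_add]
  exact intervalIntegral.integral_add (hint hu) (hint hv)

lemma tangMean_smul (c : ℝ) (v : V2 → V2) :
    tangMean a b (fun x => c • v x) = c * tangMean a b v := by
  simp only [tangMean, dot2_smul, intervalIntegral.integral_const_mul]

lemma tangMean_wP (p q r : V2) :
    tangMean a b (wP p q r) =
      (bary p q r a + bary p q r b) * dot2 (r - q) (b - a) / cross2 (q - p) (r - p) := by
  set D := cross2 (q - p) (r - p)
  set g := dot2 (r - q) (b - a)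
  have hpoint : ∀ s, dot2 (wP p q r (seg a b s)) (b - a) =
      2 * bary p q r a * g / D + 2 * (bary p q r b - bary p q r a) * g / D * s + 0 * s ^ 2 := by
    intro s
    rw [dot2_wP, bary_seg]
    ring
  simp only [tangMean, hpoint, integral_quadratic]
  ring

end TangMean

section TangMeanWT

variable {p q r : V2} (h : cross2 (q - p) (r - p) ≠ 0)
include h

lemma tangMean_wT_qr :
    tangMean q r (wT p q r) = dot2 (r - q) (r - q) / cross2 (q - p) (r - p) := by
  obtain ⟨-, hq, hr⟩ := bary_self_rotate h
  set D := cross2 (q - p) (r - p)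
  set A := dot2 (p - r) (r - q)
  set B := dot2 (q - p) (r - q)
  set G := dot2 (r - q) (r - q)
  have hAB : A + B = -G := by simp only [A, B, G, dot2, Prod.fst_sub, Prod.snd_sub]; ring
  have hpoint : ∀ s, dot2 (wT p q r (seg q r s)) (r - q) =
      -B / D + (B - A + 3 * G) / D * s + -3 * G / D * s ^ 2 := by
    intro s
    rw [dot2_wT]
    simp only [bary_seg, bary_left, bary_right, hq, hr]
    ring
  simp only [tangMean, hpoint, integral_quadratic]
  linear_combination (-1 / (2 * D)) * hAB

lemma tangMean_wT_pq : tangMean p q (wT p q r) = 0 := by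
  obtain ⟨hp, hq, -⟩ := bary_self_rotate h
  have hpoint : ∀ s, dot2 (wT p q r (seg p q s)) (q - p) =
      0 + 2 * dot2 (q - p) (q - p) / cross2 (q - p) (r - p) * s
        + -3 * dot2 (q - p) (q - p) / cross2 (q - p) (r - p) * s ^ 2 := by
    intro s
    rw [dot2_wT]
    simp only [bary_seg, bary_left, bary_right, hp, hq]
    ring
  simp only [tangMean, hpoint, integral_quadratic]
  ring

lemma tangMean_wT_pr : tangMean p r (wT p q r) = 0 := by
  obtain ⟨hp, -, hr⟩ := bary_self_rotate h
  have hpoint : ∀ s, dot2 (wT p q r (seg p r s)) (r - p) =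
      0 + 2 * dot2 (p - r) (r - p) / cross2 (q - p) (r - p) * s
        + -3 * dot2 (p - r) (r - p) / cross2 (q - p) (r - p) * s ^ 2 := by
    intro s
    rw [dot2_wT]
    simp only [bary_seg, bary_left, bary_right, hp, hr]
    ring
  simp only [tangMean, hpoint, integral_quadratic]
  ring

lemma tangMean_wT_rp : tangMean r p (wT p q r) = 0 := by
  obtain ⟨hp, -, hr⟩ := bary_self_rotate h
  have hpoint : ∀ s, dot2 (wT p q r (seg r p s)) (p - r) =
      -dot2 (p - r) (p - r) / cross2 (q - p) (r - p)
        + 4 * dot2 (p - r) (p - r) / cross2 (q - p) (r - p) * s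
        + -3 * dot2 (p - r) (p - r) / cross2 (q - p) (r - p) * s ^ 2 := by
    intro s
    rw [dot2_wT]
    simp only [bary_seg, bary_left, bary_right, hp, hr]
    ring
  simp only [tangMean, hpoint, integral_quadratic]
  ring

end TangMeanWT

section CenterCell

variable (p q r c : V2) (k₁ k₂ k₃ a : ℝ)

def centerStream : V2 → ℝ := fun x =>
  (1 / 3 : ℝ) * (k₁ * streamT p q r x + k₂ * streamT q r p x + k₃ * streamT r p q x
    + (streamP p q r x + streamP q r p x + streamP r p q x))

@[fun_prop]
lemma contDiff_centerStream {n : WithTop ℕ∞} : ContDiff ℝ n (centerStream p q r k₁ k₂ k₃) := by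
  unfold centerStream; fun_prop

lemma curl2_centerStream : curl2 (centerStream p q r k₁ k₂ k₃) = fun x =>
    (1 / 3 : ℝ) • (k₁ • wT p q r x + k₂ • wT q r p x + k₃ • wT r p q x
      + (wP p q r x + wP q r p x + wP r p q x)) := by
  unfold centerStream
  simp (disch := fun_prop) only [curl2_const_mul, curl2_add, curl2_streamT, curl2_streamP]

variable {p q r c k₁ k₂ k₃ a}

lemma normalCont_centerStream (h : cross2 (q - p) (r - p) ≠ 0) (hc : cross2 (q - c) (r - c) ≠ 0)
    (hk : k₁ + 2 = 3 * a) :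
    NormalCont q r (curl2 (centerStream p q r k₁ k₂ k₃)) (curl2 fun x => a * streamT c q r x) := by
  obtain ⟨-, hq, hr⟩ := bary_self_rotate h
  obtain ⟨-, hq', hr'⟩ := bary_self_rotate hc
  -- on the line `qr`, `λ_p = 0` and `λ_q + λ_r = 1`: both streams are multiples of `λ_q λ_r`,
  -- up to the constant `1/3` coming from `λ_q² + λ_r²`
  refine normalCont_curl2_of_eq_add_const (c := 1 / 3) (by fun_prop) (by fun_prop) fun s => ?_
  simp only [centerStream, streamT, streamP, bary_seg, bary_left, bary_right, hq, hr, hq', hr']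
  linear_combination (s * (s - 1) / 3) * hk

lemma tangMeanCont_centerStream (h : cross2 (q - p) (r - p) ≠ 0) (hc : cross2 (q - c) (r - c) ≠ 0)
    (hk : (k₁ - 1) * cross2 (q - c) (r - c) = 3 * a * cross2 (q - p) (r - p)) :
    TangMeanCont q r (curl2 (centerStream p q r k₁ k₂ k₃)) (curl2 fun x => a * streamT c q r x) := by
  obtain ⟨-, hq, hr⟩ := bary_self_rotate h
  have h' : cross2 (r - q) (p - q) ≠ 0 := by rwa [cross2_rotate]
  have h'' : cross2 (p - r) (q - r) ≠ 0 := by rwa [cross2_rotate q r p, cross2_rotate p q r]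
  change tangMean q r _ = tangMean q r _
  rw [curl2_centerStream, curl2_const_mul, curl2_streamT]
  simp (disch := fun_prop) only [tangMean_add, tangMean_smul]
  rw [tangMean_wT_qr h, tangMean_wT_pq h', tangMean_wT_rp h'', tangMean_wT_qr hc, tangMean_wP,
    tangMean_wP, tangMean_wP, cross2_rotate p q r, cross2_rotate q r p, cross2_rotate p q r]
  have hsum : dot2 (p - r) (r - q) + dot2 (q - p) (r - q) = -dot2 (r - q) (r - q) := by
    simp only [dot2, Prod.fst_sub, Prod.snd_sub]; ring
  simp only [bary_left, bary_right, hq, hr]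
  field_simp
  linear_combination dot2 (r - q) (r - q) * hk + cross2 (q - c) (r - c) * hsum

end CenterCell

lemma curl2_streamT_outer_edges {p q r : V2} (h : cross2 (q - p) (r - p) ≠ 0) (a : ℝ) :
    NormalZero p q (curl2 fun x => a * streamT p q r x) ∧
      TangMeanZero p q (curl2 fun x => a * streamT p q r x) ∧
      NormalZero p r (curl2 fun x => a * streamT p q r x) ∧
      TangMeanZero p r (curl2 fun x => a * streamT p q r x) := by
  refine ⟨normalZero_curl2_of_eq_const (c := 0) (by fun_prop) fun s => ?_, ?_,
    normalZero_curl2_of_eq_const (c := 0) (by fun_prop) fun s => ?_, ?_⟩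
  · simp only [streamT, bary_seg, bary_left, bary_right]; ring
  · change tangMean p q _ = 0
    rw [curl2_const_mul, curl2_streamT, tangMean_smul, tangMean_wT_pq h, mul_zero]
  · simp only [streamT, bary_seg, bary_left, bary_right]; ring
  · change tangMean p r _ = 0
    rw [curl2_const_mul, curl2_streamT, tangMean_smul, tangMean_wT_pr h, mul_zero]

lemma psiT0_coeff_add_two {S S₀ : ℝ} (h : S + S₀ ≠ 0) :
    (S - 2 * S₀) / (S + S₀) + 2 = 3 * (S / (S + S₀)) := by
  field_simp; ring

lemma psiT0_coeff_sub_one_mul {S S₀ D D₀ : ℝ} (h : S + S₀ ≠ 0) (hS : 2 * S = -D)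
    (hS₀ : 2 * S₀ = D₀) : ((S - 2 * S₀) / (S + S₀) - 1) * D = 3 * (S / (S + S₀)) * D₀ := by
  field_simp
  linear_combination (-3 * S₀) * hS + 3 * S * hS₀

def psiT0coeff (B C : Fin 3 → V2) (j : Fin 3) : ℝ :=
  (Sjarea B C j - 2 * S0area B) / (Sjarea B C j + S0area B)

lemma psiT0c_eq_curl2 (B C : Fin 3 → V2) (j : Fin 3) :
    psiT0c B C = curl2 (centerStream (B j) (B (j + 1)) (B (j + 2))
      (psiT0coeff B C j) (psiT0coeff B C (j + 1)) (psiT0coeff B C (j + 2))) := by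
  rw [curl2_centerStream]
  funext x
  fin_cases j <;>
    simp only [psiT0c, psiT0coeff, Fin.sum_univ_three, Fin.zero_eta, Fin.mk_one, Fin.reduceFinMk,
      Fin.isValue, Fin.reduceAdd, zero_add, one_div, smul_add] <;>
    abel

lemma psiT0nb_eq_curl2 (B C : Fin 3 → V2) (j : Fin 3) :
    psiT0nb B C j = curl2 fun x =>
      Sjarea B C j / (Sjarea B C j + S0area B) * streamT (C j) (B (j + 1)) (B (j + 2)) x := by
  rw [curl2_const_mul]; rfl

lemma cross2_rotate_fin (B : Fin 3 → V2) (j : Fin 3) :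
    cross2 (B (j + 1) - B j) (B (j + 2) - B j) = cross2 (B 1 - B 0) (B 2 - B 0) := by
  fin_cases j <;>
    simp only [cross2, Fin.zero_eta, Fin.mk_one, Fin.reduceFinMk, Fin.isValue, Fin.reduceAdd,
      zero_add, Prod.fst_sub, Prod.snd_sub] <;>
    ring

/-- `T_0` has vertices `B 0, B 1, B 2`; the neighbour `T_j` across `e_j = [B (j+1), B (j+2)]`
has third vertex `C j`. -/
theorem stmt14_general (B C : Fin 3 → V2)
    (hB : 0 < cross2 (B 1 - B 0) (B 2 - B 0))
    (hside : ∀ j : Fin 3,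
      cross2 (B (j + 2) - B (j + 1)) (C j - B (j + 1)) *
        cross2 (B (j + 2) - B (j + 1)) (B j - B (j + 1)) < 0) :
    (∀ x ∈ hull3 (B 0) (B 1) (B 2), div2 (psiT0c B C) x = 0) ∧
    (∀ j : Fin 3, ∀ x ∈ hull3 (C j) (B (j + 1)) (B (j + 2)),
      div2 (psiT0nb B C j) x = 0) ∧
    (∀ j : Fin 3,
      NormalCont (B (j + 1)) (B (j + 2)) (psiT0c B C) (psiT0nb B C j) ∧
      TangMeanCont (B (j + 1)) (B (j + 2)) (psiT0c B C) (psiT0nb B C j)) ∧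
    (∀ j : Fin 3,
      NormalZero (C j) (B (j + 1)) (psiT0nb B C j) ∧
      TangMeanZero (C j) (B (j + 1)) (psiT0nb B C j) ∧
      NormalZero (C j) (B (j + 2)) (psiT0nb B C j) ∧
      TangMeanZero (C j) (B (j + 2)) (psiT0nb B C j)) := by
  have hC : ∀ j, cross2 (B (j + 1) - C j) (B (j + 2) - C j) < 0 := fun j => by
    have h := hside j
    rw [cross2_rotate (C j), cross2_rotate (B j), cross2_rotate_fin] at h
    exact neg_of_mul_neg_left h hB.le
  have hS₀ : 2 * S0area B = cross2 (B 1 - B 0) (B 2 - B 0) := by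
    rw [S0area, abs_of_pos hB]; ring
  have hS : ∀ j, 2 * Sjarea B C j = -cross2 (B (j + 1) - C j) (B (j + 2) - C j) := fun j => by
    rw [Sjarea, abs_of_neg (hC j)]; ring
  have hsum : ∀ j, Sjarea B C j + S0area B ≠ 0 := fun j => by linarith [hS j, hC j]
  refine ⟨fun x _ => ?_, fun j x _ => ?_, fun j => ⟨?_, ?_⟩, fun j => ?_⟩
  · rw [psiT0c_eq_curl2 B C 0]
    exact div2_curl2 (by fun_prop)
  · rw [psiT0nb_eq_curl2]
    exact div2_curl2 (by fun_prop)
  · rw [psiT0c_eq_curl2 B C j, psiT0nb_eq_curl2]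
    exact normalCont_centerStream (by rw [cross2_rotate_fin]; exact hB.ne') (hC j).ne
      (psiT0_coeff_add_two (hsum j))
  · rw [psiT0c_eq_curl2 B C j, psiT0nb_eq_curl2]
    exact tangMeanCont_centerStream (by rw [cross2_rotate_fin]; exact hB.ne') (hC j).ne
      (psiT0_coeff_sub_one_mul (hsum j) (hS j) (hS₀.trans (cross2_rotate_fin B j).symm))
  · rw [psiT0nb_eq_curl2]
    exact curl2_streamT_outer_edges (hC j).ne _

/-- the cell-patch field `ψ_{T_0}`. `T_0` has vertices `B 0, B 1, B 2`
(positively oriented); for each `j`, the neighbor `T_j` across the edge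
`e_j = [B (j+1), B (j+2)]` (opposite `B j`) has third vertex `C j`, lying strictly on
the other side of that edge. The field equal to `psiT0nb j` on `T_j`, to `psiT0c`
on `T_0` and zero elsewhere is divergence free on each cell, has continuous normal
components and continuous edge-integral tangential components across `e_1, e_2, e_3`,
and has vanishing normal components and vanishing edge-integral tangential
components on the six outer edges of the four-cell patch. -/
theorem stmt14 (B C : Fin 3 → V2)
    (hB : 0 < cross2 (B 1 - B 0) (B 2 - B 0))
    (hC : ∀ j : Fin 3, cross2 (B (j + 1) - C j) (B (j + 2) - C j) ≠ 0)
    (hside : ∀ j : Fin 3,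
      cross2 (B (j + 2) - B (j + 1)) (C j - B (j + 1)) *
        cross2 (B (j + 2) - B (j + 1)) (B j - B (j + 1)) < 0) :
    (∀ x ∈ hull3 (B 0) (B 1) (B 2), div2 (psiT0c B C) x = 0) ∧
    (∀ j : Fin 3, ∀ x ∈ hull3 (C j) (B (j + 1)) (B (j + 2)),
      div2 (psiT0nb B C j) x = 0) ∧
    (∀ j : Fin 3,
      NormalCont (B (j + 1)) (B (j + 2)) (psiT0c B C) (psiT0nb B C j) ∧
      TangMeanCont (B (j + 1)) (B (j + 2)) (psiT0c B C) (psiT0nb B C j)) ∧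
    (∀ j : Fin 3,
      NormalZero (C j) (B (j + 1)) (psiT0nb B C j) ∧
      TangMeanZero (C j) (B (j + 1)) (psiT0nb B C j) ∧
      NormalZero (C j) (B (j + 2)) (psiT0nb B C j) ∧
      TangMeanZero (C j) (B (j + 2)) (psiT0nb B C j)) :=
  stmt14_general B C hB hside
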